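/- arXiv:1805.02180 — 2 statements merged into one kernel-verified Lean document; each statement's English description precedes it below -/
import Mathlib

section
/- Let X be a geodesic δ-hyperbolic metric space in which, for constants c ≥ 1 and a ≥ 1 and a positive function δ_p, every geodesic [u,v] satisfies the c-uniformity conditions: length([u,v]) ≤ c·d(u,v), and for every point z on [u,v], the minimum of the lengths of the two subsegments from z to the endpoints is ≤ c·δ_p(z). Suppose also d_p(p,q) ≤ 4a²·log(1 + d(p,q)/min{δ_p(p), δ_p(q)}) for all p,q, where d_p is the hyperbolic distance. Then every geodesic triangle with vertices x, y, z is thin with constant 4a²·log(1 + c·(2c + 3)): every point p on edge [x,y] has d_p-distance at most 4a²·log(1 + c·(2c+3)) from [y,z] ∪ [x,z]. -/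
lemma thin_aux {X : Type*} [MetricSpace X]
    (dp : X → X → ℝ) (δp : X → ℝ) (c a : ℝ) (hc : 1 ≤ c) (ha : 1 ≤ a)
    (hδ : ∀ p, 0 < δp p)
    (hdp : ∀ p q : X,
      dp p q ≤ 4 * a ^ 2 * Real.log (1 + dist p q / min (δp p) (δp q)))
    (p x y z : X) (t : ℝ) (ht0 : 0 ≤ t)
    (hpx : dist p x ≤ t) (htδ : t ≤ c * δp p) (hxy : 2 * t ≤ c * dist x y)
    (Lxz Lyz : ℝ) (hLxz : 0 ≤ Lxz) (hLyz : 0 ≤ Lyz)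
    (α β : ℝ → X)
    (hα0 : α 0 = x) (hα1 : α Lxz = z) (hβ0 : β 0 = y) (hβ1 : β Lyz = z)
    (hlipα : ∀ s ∈ Set.Icc (0:ℝ) Lxz, ∀ u ∈ Set.Icc (0:ℝ) Lxz,
      dist (α s) (α u) ≤ |s - u|)
    (hlipβ : ∀ s ∈ Set.Icc (0:ℝ) Lyz, ∀ u ∈ Set.Icc (0:ℝ) Lyz,
      dist (β s) (β u) ≤ |s - u|)
    (hconeα : ∀ s ∈ Set.Icc (0:ℝ) Lxz, min s (Lxz - s) ≤ c * δp (α s))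
    (hconeβ : ∀ s ∈ Set.Icc (0:ℝ) Lyz, min s (Lyz - s) ≤ c * δp (β s)) :
    ∃ s : ℝ,
      (s ∈ Set.Icc (0:ℝ) Lyz ∧
        dp p (β s) ≤ 4 * a ^ 2 * Real.log (1 + c * (2 * c + 3))) ∨
      (s ∈ Set.Icc (0:ℝ) Lxz ∧
        dp p (α s) ≤ 4 * a ^ 2 * Real.log (1 + c * (2 * c + 3))) := by
  have hc0 : (0:ℝ) < c := by linarith
  have hδp : 0 < δp p := hδ p
  -- the key reduction: it suffices to bound the distance by K·min of the δp's
  have key : ∀ q : X, dist p q ≤ c * (2 * c + 3) * δp p →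
      dist p q ≤ c * (2 * c + 3) * δp q →
      dp p q ≤ 4 * a ^ 2 * Real.log (1 + c * (2 * c + 3)) := by
    intro q h1 h2
    have hmin : 0 < min (δp p) (δp q) := lt_min (hδ p) (hδ q)
    have hd : dist p q ≤ c * (2 * c + 3) * min (δp p) (δp q) := by
      rcases min_cases (δp p) (δp q) with ⟨h, _⟩ | ⟨h, _⟩ <;> rw [h] <;> assumption
    have hr : dist p q / min (δp p) (δp q) ≤ c * (2 * c + 3) :=
      (div_le_iff₀ hmin).2 (by linarith)
    have hr0 : 0 ≤ dist p q / min (δp p) (δp q) := div_nonneg dist_nonneg hmin.le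
    refine (hdp p q).trans ?_
    have h4 : (0:ℝ) ≤ 4 * a ^ 2 := by positivity
    apply mul_le_mul_of_nonneg_left _ h4
    apply Real.log_le_log (by linarith)
    linarith
  rcases le_or_gt (2 * t) Lxz with hcase | hcase
  · -- Case 1: take q = α t
    have htmem : t ∈ Set.Icc (0:ℝ) Lxz := ⟨ht0, by linarith⟩
    refine ⟨t, Or.inr ⟨htmem, ?_⟩⟩
    have hlx : dist x (α t) ≤ t := by
      have h := hlipα 0 ⟨le_refl 0, hLxz⟩ t htmem
      rw [hα0] at h
      calc dist x (α t) ≤ |0 - t| := h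
        _ = t := by rw [zero_sub, abs_neg, abs_of_nonneg ht0]
    have hd : dist p (α t) ≤ 2 * t :=
      (dist_triangle p x (α t)).trans (by linarith)
    have hcq : t ≤ c * δp (α t) := by
      have h := hconeα t htmem
      rwa [min_eq_left (by linarith)] at h
    apply key
    · nlinarith [mul_le_mul_of_nonneg_left htδ (show (0:ℝ) ≤ 2*c+3 by linarith),
        mul_nonneg hc0.le ht0]
    · nlinarith [mul_le_mul_of_nonneg_left hcq (show (0:ℝ) ≤ 2*c+3 by linarith),
        mul_nonneg hc0.le ht0]
  · -- Case 2: Lxz < 2t, so t > 0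
    have ht0' : 0 < t := by linarith
    rcases le_or_gt t ((c + 1) * Lxz) with h2a | h2b
    · -- Case 2a: q = α (Lxz/2)
      have hmem : Lxz/2 ∈ Set.Icc (0:ℝ) Lxz := ⟨by linarith, by linarith⟩
      refine ⟨Lxz/2, Or.inr ⟨hmem, ?_⟩⟩
      have hlx : dist x (α (Lxz/2)) ≤ Lxz/2 := by
        have h := hlipα 0 ⟨le_refl 0, hLxz⟩ (Lxz/2) hmem
        rw [hα0] at h
        calc dist x (α (Lxz/2)) ≤ |0 - Lxz/2| := h
          _ = Lxz/2 := by rw [zero_sub, abs_neg, abs_of_nonneg (by linarith)]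
      have hd : dist p (α (Lxz/2)) ≤ t + Lxz/2 :=
        (dist_triangle p x (α (Lxz/2))).trans (by linarith)
      have hcq : Lxz/2 ≤ c * δp (α (Lxz/2)) := by
        have h := hconeα (Lxz/2) hmem
        rwa [min_eq_left (by linarith)] at h
      apply key
      · nlinarith [mul_le_mul_of_nonneg_left htδ (show (0:ℝ) ≤ 2*c+3 by linarith),
          mul_nonneg hc0.le ht0]
      · nlinarith [mul_le_mul_of_nonneg_left hcq (show (0:ℝ) ≤ 2*c+3 by linarith)]
    · -- Case 2b: Lxz < t/(c+1); go to the edge [y,z]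
      have hpz : dist p z ≤ t + Lxz := by
        have h := hlipα 0 ⟨le_refl 0, hLxz⟩ Lxz ⟨hLxz, le_refl _⟩
        rw [hα0, hα1] at h
        have hxz : dist x z ≤ Lxz := by
          calc dist x z ≤ |0 - Lxz| := h
            _ = Lxz := by rw [zero_sub, abs_neg, abs_of_nonneg hLxz]
        calc dist p z ≤ dist p x + dist x z := dist_triangle p x z
          _ ≤ t + Lxz := by linarith
      have hzy : dist z y ≤ Lyz := by
        have h := hlipβ Lyz ⟨hLyz, le_refl _⟩ 0 ⟨le_refl 0, hLyz⟩
        rw [hβ0, hβ1] at h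
        calc dist z y ≤ |Lyz - 0| := h
          _ = Lyz := by rw [sub_zero, abs_of_nonneg hLyz]
      have hL : 2 * t ≤ c * Lxz + c * Lyz := by
        have hxyd : dist x y ≤ Lxz + Lyz := by
          have hxz : dist x z ≤ Lxz := by
            have h := hlipα 0 ⟨le_refl 0, hLxz⟩ Lxz ⟨hLxz, le_refl _⟩
            rw [hα0, hα1] at h
            calc dist x z ≤ |0 - Lxz| := h
              _ = Lxz := by rw [zero_sub, abs_neg, abs_of_nonneg hLxz]
          calc dist x y ≤ dist x z + dist z y := dist_triangle x z y
            _ ≤ Lxz + Lyz := by linarith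
        nlinarith [mul_le_mul_of_nonneg_left hxyd hc0.le]
      have hLxzt : Lxz < t := by nlinarith [mul_nonneg hc0.le hLxz]
      rcases le_or_gt (2 * (t + Lxz)) Lyz with h2bi | h2bii
      · -- Case 2b-i: q = β (Lyz - (t+Lxz))
        have hw0 : (0:ℝ) ≤ t + Lxz := by linarith
        have hmem : Lyz - (t + Lxz) ∈ Set.Icc (0:ℝ) Lyz := ⟨by linarith, by linarith⟩
        refine ⟨Lyz - (t + Lxz), Or.inl ⟨hmem, ?_⟩⟩
        have hlz : dist z (β (Lyz - (t + Lxz))) ≤ t + Lxz := by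
          have h := hlipβ Lyz ⟨hLyz, le_refl _⟩ (Lyz - (t + Lxz)) hmem
          rw [hβ1] at h
          calc dist z (β (Lyz - (t + Lxz))) ≤ |Lyz - (Lyz - (t + Lxz))| := h
            _ = t + Lxz := by rw [show Lyz - (Lyz - (t + Lxz)) = t + Lxz by ring,
                abs_of_nonneg hw0]
        have hd : dist p (β (Lyz - (t + Lxz))) ≤ 2 * (t + Lxz) :=
          (dist_triangle p z (β (Lyz - (t + Lxz)))).trans (by linarith)
        have hcq : t + Lxz ≤ c * δp (β (Lyz - (t + Lxz))) := by
          have h := hconeβ (Lyz - (t + Lxz)) hmem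
          rwa [min_eq_right (by linarith), show Lyz - (Lyz - (t + Lxz)) = t + Lxz by ring] at h
        apply key
        · nlinarith [mul_le_mul_of_nonneg_left htδ (show (0:ℝ) ≤ 2*c+3 by linarith),
            mul_nonneg hc0.le ht0]
        · nlinarith [mul_le_mul_of_nonneg_left hcq (show (0:ℝ) ≤ 2*c+3 by linarith),
            mul_nonneg hc0.le hw0]
      · -- Case 2b-ii: q = β (Lyz/2)
        have hmem : Lyz/2 ∈ Set.Icc (0:ℝ) Lyz := ⟨by linarith, by linarith⟩
        refine ⟨Lyz/2, Or.inl ⟨hmem, ?_⟩⟩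
        have hlz : dist z (β (Lyz/2)) ≤ Lyz/2 := by
          have h := hlipβ Lyz ⟨hLyz, le_refl _⟩ (Lyz/2) hmem
          rw [hβ1] at h
          calc dist z (β (Lyz/2)) ≤ |Lyz - Lyz/2| := h
            _ = Lyz/2 := by rw [show Lyz - Lyz/2 = Lyz/2 by ring, abs_of_nonneg (by linarith)]
        have hd : dist p (β (Lyz/2)) ≤ (t + Lxz) + Lyz/2 :=
          (dist_triangle p z (β (Lyz/2))).trans (by linarith)
        have hcq : Lyz/2 ≤ c * δp (β (Lyz/2)) := by
          have h := hconeβ (Lyz/2) hmem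
          rwa [min_eq_left (by linarith)] at h
        -- t + Lxz ≤ (c+1) Lyz
        have hcc : c * (t + Lxz) ≤ c * ((c + 1) * Lyz) := by
          have f1 : c * ((c + 1) * Lxz) ≤ c * t :=
            mul_le_mul_of_nonneg_left h2b.le hc0.le
          have f3 : (c + 1) * (2 * t) ≤ (c + 1) * (c * Lxz + c * Lyz) :=
            mul_le_mul_of_nonneg_left hL (by linarith)
          linarith [f1, f3, hLxz, mul_nonneg hc0.le hLxz]
        have hw1 : t + Lxz ≤ (c + 1) * Lyz := le_of_mul_le_mul_left hcc hc0
        apply key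
        · nlinarith [mul_le_mul_of_nonneg_left htδ (show (0:ℝ) ≤ 2*c+3 by linarith),
            mul_nonneg hc0.le ht0]
        · nlinarith [mul_le_mul_of_nonneg_left hcq (show (0:ℝ) ≤ 2*c+3 by linarith)]



/-- Lemma 3.9 (geodesic triangles are thin): if the edges of a geodesic triangle,
parameterized by arclength with respect to the underlying metric, are c-σ-uniform
curves and the σ-metric `dp` satisfies the logarithmic upper bound, then every point
on the edge `[x,y]` lies within `dp`-distance `4a²·log(1 + c(2c+3))` of the union of
the two other edges. -/
theorem geodesic_triangles_thin {X : Type*} [MetricSpace X]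
    (dp : X → X → ℝ) (δp : X → ℝ) (c a : ℝ) (hc : 1 ≤ c) (ha : 1 ≤ a)
    (hδ : ∀ p, 0 < δp p)
    (hdp : ∀ p q : X,
      dp p q ≤ 4 * a ^ 2 * Real.log (1 + dist p q / min (δp p) (δp q)))
    (x y z : X) (Lxy Lyz Lxz : ℝ)
    (hLxy : 0 ≤ Lxy) (hLyz : 0 ≤ Lyz) (hLxz : 0 ≤ Lxz)
    (γxy γyz γxz : ℝ → X)
    -- endpoints
    (hxy0 : γxy 0 = x) (hxy1 : γxy Lxy = y)
    (hyz0 : γyz 0 = y) (hyz1 : γyz Lyz = z)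
    (hxz0 : γxz 0 = x) (hxz1 : γxz Lxz = z)
    -- arclength parameterization: distances are bounded by parameter gaps
    (hlipxy : ∀ s ∈ Set.Icc (0:ℝ) Lxy, ∀ t ∈ Set.Icc (0:ℝ) Lxy,
      dist (γxy s) (γxy t) ≤ |s - t|)
    (hlipyz : ∀ s ∈ Set.Icc (0:ℝ) Lyz, ∀ t ∈ Set.Icc (0:ℝ) Lyz,
      dist (γyz s) (γyz t) ≤ |s - t|)
    (hlipxz : ∀ s ∈ Set.Icc (0:ℝ) Lxz, ∀ t ∈ Set.Icc (0:ℝ) Lxz,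
      dist (γxz s) (γxz t) ≤ |s - t|)
    -- quasi-geodesic condition: length ≤ c · distance of endpoints
    (hqxy : Lxy ≤ c * dist x y) (hqyz : Lyz ≤ c * dist y z)
    (hqxz : Lxz ≤ c * dist x z)
    -- twisted double cone condition: min of the two subcurve lengths ≤ c·δp
    (hconexy : ∀ t ∈ Set.Icc (0:ℝ) Lxy, min t (Lxy - t) ≤ c * δp (γxy t))
    (hconeyz : ∀ t ∈ Set.Icc (0:ℝ) Lyz, min t (Lyz - t) ≤ c * δp (γyz t))
    (hconexz : ∀ t ∈ Set.Icc (0:ℝ) Lxz, min t (Lxz - t) ≤ c * δp (γxz t)) :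
    ∀ t ∈ Set.Icc (0:ℝ) Lxy, ∃ s : ℝ,
      (s ∈ Set.Icc (0:ℝ) Lyz ∧
        dp (γxy t) (γyz s) ≤ 4 * a ^ 2 * Real.log (1 + c * (2 * c + 3))) ∨
      (s ∈ Set.Icc (0:ℝ) Lxz ∧
        dp (γxy t) (γxz s) ≤ 4 * a ^ 2 * Real.log (1 + c * (2 * c + 3))) := by 
  intro t ht
  rcases le_or_gt t (Lxy - t) with h | h
  · -- t is closer to x
    have hpx : dist (γxy t) x ≤ t := by
      have hh := hlipxy t ht 0 ⟨le_refl 0, hLxy⟩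
      rw [hxy0] at hh
      calc dist (γxy t) x ≤ |t - 0| := hh
        _ = t := by rw [sub_zero, abs_of_nonneg ht.1]
    have htδ : t ≤ c * δp (γxy t) := by
      have hh := hconexy t ht
      rwa [min_eq_left (by linarith)] at hh
    have hxy2 : 2 * t ≤ c * dist x y := by linarith
    exact thin_aux dp δp c a hc ha hδ hdp (γxy t) x y z t ht.1 hpx htδ hxy2
      Lxz Lyz hLxz hLyz γxz γyz hxz0 hxz1 hyz0 hyz1 hlipxz hlipyz hconexz hconeyz
  · -- t is closer to y
    have ht0' : 0 ≤ Lxy - t := by linarith [ht.2]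
    have hpy : dist (γxy t) y ≤ Lxy - t := by
      have hh := hlipxy t ht Lxy ⟨hLxy, le_refl _⟩
      rw [hxy1] at hh
      calc dist (γxy t) y ≤ |t - Lxy| := hh
        _ = Lxy - t := by rw [abs_of_nonpos (by linarith [ht.2]), neg_sub]
    have htδ : Lxy - t ≤ c * δp (γxy t) := by
      have hh := hconexy t ht
      rwa [min_eq_right h.le] at hh
    have hxy2 : 2 * (Lxy - t) ≤ c * dist y x := by
      rw [dist_comm]; linarith [ht.1]
    obtain ⟨s, hs⟩ := thin_aux dp δp c a hc ha hδ hdp (γxy t) y x z (Lxy - t) ht0'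
      hpy htδ hxy2 Lyz Lxz hLyz hLxz γyz γxz hyz0 hyz1 hxz0 hxz1 hlipyz hlipxz
      hconeyz hconexz
    exact ⟨s, hs.symm⟩
end

section
/- Let (X, d_g) be a length space, Σ-free, p : X → (0,∞) continuous with δ = 1/p 1-Lipschitz along curves, and let d_p(x,y) := inf over rectifiable curves γ from x to y of ∫_γ p ds (arclength with respect to d_g). Then for all x, y ∈ X: log(1 + d_g(x,y)·max{p(x), p(y)}) ≤ d_p(x,y), and in particular |log δ(x) − log δ(y)| ≤ d_p(x,y). -/
/-!
Along a unit-speed curve `γ` starting at `x`, the 1-Lipschitz bound on `δ = 1/p` gives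
`δ(γ s) ≤ δ(x) + s`, so `∫₀ᴸ p(γ s) ds ≥ ∫₀ᴸ (δ(x) + s)⁻¹ ds = log (1 + L p(x))`, and
`L ≥ d(x, y)`. Running the curve backwards gives the same bound with `p(y)`. The second
inequality follows from the first, since `|log a - log b| ≤ log (1 + |a - b| / min a b)`.
-/

open Set intervalIntegral

lemma integral_inv_const_add {c L : ℝ} (hc : 0 < c) (hL : 0 ≤ L) :
    ∫ s in (0 : ℝ)..L, (c + s)⁻¹ = Real.log (1 + L / c) := by
  rw [integral_comp_add_left (fun t : ℝ => t⁻¹) c,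
    integral_inv_of_pos (by linarith) (by linarith)]
  congr 1
  field_simp
  ring

lemma log_one_add_div_le_integral {c L : ℝ} {f : ℝ → ℝ} (hc : 0 < c) (hL : 0 ≤ L)
    (hf : ContinuousOn f (Icc 0 L)) (hbd : ∀ s ∈ Icc 0 L, (c + s)⁻¹ ≤ f s) :
    Real.log (1 + L / c) ≤ ∫ s in (0 : ℝ)..L, f s := by
  have hinv : ContinuousOn (fun s : ℝ => (c + s)⁻¹) (Icc 0 L) :=
    (continuousOn_const.add continuousOn_id).inv₀ fun s hs =>
      (add_pos_of_pos_of_nonneg hc hs.1).ne'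
  rw [← integral_inv_const_add hc hL]
  exact integral_mono_on hL (hinv.intervalIntegrable_of_Icc hL)
    (hf.intervalIntegrable_of_Icc hL) hbd

lemma LipschitzOnWith.comp_const_sub {X : Type*} [PseudoMetricSpace X] {γ : ℝ → X} {L : ℝ}
    (hγ : LipschitzOnWith 1 γ (Icc 0 L)) :
    LipschitzOnWith 1 (fun s => γ (L - s)) (Icc 0 L) := by
  have hrev : MapsTo (fun s : ℝ => L - s) (Icc 0 L) (Icc 0 L) := fun s hs =>
    ⟨by linarith [hs.2], by linarith [hs.1]⟩
  have h := hγ.comp (IsometryEquiv.subLeft L).isometry.lipschitz.lipschitzOnWith hrev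
  rw [one_mul] at h
  exact h

section WeightedLength

variable {X : Type*} [PseudoMetricSpace X] {p : X → ℝ}

lemma inv_add_le_of_lipschitzWith_one_div (hp : ∀ u, 0 < p u)
    (hlip : LipschitzWith 1 fun u => 1 / p u) {γ : ℝ → X} {L s : ℝ}
    (hγ : LipschitzOnWith 1 γ (Icc 0 L)) (hs : s ∈ Icc 0 L) :
    (1 / p (γ 0) + s)⁻¹ ≤ p (γ s) := by
  have hδ : dist (1 / p (γ s)) (1 / p (γ 0)) ≤ dist (γ s) (γ 0) := by
    simpa using hlip.dist_le_mul (γ s) (γ 0)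
  have hγs : dist (γ s) (γ 0) ≤ s := by
    simpa [Real.dist_eq, abs_of_nonneg hs.1] using
      hγ.dist_le_mul s hs 0 ⟨le_rfl, hs.1.trans hs.2⟩
  have hle : 1 / p (γ s) ≤ 1 / p (γ 0) + s := by
    linarith [(abs_le.mp (Real.dist_eq _ _ ▸ hδ.trans hγs)).2]
  simpa using inv_anti₀ (one_div_pos.2 (hp (γ s))) hle

lemma log_one_add_mul_le_integral (hp : ∀ u, 0 < p u)
    (hlip : LipschitzWith 1 fun u => 1 / p u) {γ : ℝ → X} {L : ℝ} (hL : 0 ≤ L)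
    (hγ : LipschitzOnWith 1 γ (Icc 0 L)) :
    Real.log (1 + L * p (γ 0)) ≤ ∫ s in (0 : ℝ)..L, p (γ s) := by
  have hpc : Continuous p := by
    have h : Continuous fun u => (1 / p u)⁻¹ :=
      hlip.continuous.inv₀ fun u => (one_div_pos.2 (hp u)).ne'
    simpa only [one_div, inv_inv] using h
  have h := log_one_add_div_le_integral (one_div_pos.2 (hp (γ 0))) hL
    (hpc.comp_continuousOn hγ.continuousOn)
    fun s hs => inv_add_le_of_lipschitzWith_one_div hp hlip hγ hs
  simpa only [one_div, div_inv_eq_mul, Function.comp_def] using h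

lemma log_one_add_mul_max_le_integral (hp : ∀ u, 0 < p u)
    (hlip : LipschitzWith 1 fun u => 1 / p u) {γ : ℝ → X} {L : ℝ} (hL : 0 ≤ L)
    (hγ : LipschitzOnWith 1 γ (Icc 0 L)) :
    Real.log (1 + L * max (p (γ 0)) (p (γ L))) ≤ ∫ s in (0 : ℝ)..L, p (γ s) := by
  rcases max_choice (p (γ 0)) (p (γ L)) with h | h <;> rw [h]
  · exact log_one_add_mul_le_integral hp hlip hL hγ
  · have hrev := log_one_add_mul_le_integral hp hlip hL hγ.comp_const_sub
    simpa [integral_comp_sub_left (fun s => p (γ s)) L] using hrev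

lemma log_one_add_dist_mul_max_le_integral (hp : ∀ u, 0 < p u)
    (hlip : LipschitzWith 1 fun u => 1 / p u) {γ : ℝ → X} {L : ℝ} (hL : 0 ≤ L)
    (hγ : LipschitzOnWith 1 γ (Icc 0 L)) :
    Real.log (1 + dist (γ 0) (γ L) * max (p (γ 0)) (p (γ L))) ≤
      ∫ s in (0 : ℝ)..L, p (γ s) := by
  have hdist : dist (γ 0) (γ L) ≤ L := by
    simpa [Real.dist_eq, abs_of_nonneg hL] using
      hγ.dist_le_mul 0 ⟨le_rfl, hL⟩ L ⟨hL, le_rfl⟩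
  have hmax : 0 < max (p (γ 0)) (p (γ L)) := lt_max_of_lt_left (hp _)
  refine le_trans (Real.log_le_log (by positivity) ?_)
    (log_one_add_mul_max_le_integral hp hlip hL hγ)
  gcongr

end WeightedLength

lemma log_sub_log_le_log_one_add_div {a b d : ℝ} (ha : 0 < a) (hb : 0 < b) (hab : a ≤ b + d) :
    Real.log a - Real.log b ≤ Real.log (1 + d / b) := by
  rw [← Real.log_div ha.ne' hb.ne']
  refine Real.log_le_log (div_pos ha hb) ?_
  rw [div_le_iff₀ hb, add_mul, div_mul_cancel₀ _ hb.ne']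
  linarith

lemma abs_log_sub_log_le_log_one_add_mul_max {a b d : ℝ} (ha : 0 < a) (hb : 0 < b)
    (hab : dist a b ≤ d) :
    |Real.log a - Real.log b| ≤ Real.log (1 + d * max a⁻¹ b⁻¹) := by
  have hd : 0 ≤ d := dist_nonneg.trans hab
  obtain ⟨hba, hab'⟩ := abs_le.mp (Real.dist_eq a b ▸ hab)
  have hmono {c : ℝ} (hc : 0 < c) (hcmax : c⁻¹ ≤ max a⁻¹ b⁻¹) :
      Real.log (1 + d / c) ≤ Real.log (1 + d * max a⁻¹ b⁻¹) := by
    rw [div_eq_mul_inv]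
    exact Real.log_le_log (by positivity) (by gcongr)
  rw [abs_sub_le_iff]
  exact ⟨(log_sub_log_le_log_one_add_div ha hb (by linarith)).trans
      (hmono hb (le_max_right _ _)),
    (log_sub_log_le_log_one_add_div hb ha (by linarith)).trans
      (hmono ha (le_max_left _ _))⟩

theorem sigma_metric_log_lower_bound_general {X : Type*} [MetricSpace X]
    (p : X → ℝ) (hp : ∀ u, 0 < p u)
    (hlip : LipschitzWith 1 fun u => 1 / p u)
    (dp : X → X → ℝ)
    (hdp : ∀ x y : X, dp x y = sInf {r : ℝ | ∃ (L : ℝ) (γ : ℝ → X),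
      0 ≤ L ∧ LipschitzOnWith 1 γ (Set.Icc 0 L) ∧ γ 0 = x ∧ γ L = y ∧
        r = ∫ s in (0:ℝ)..L, p (γ s)})
    (hconn : ∀ x y : X, ∃ (L : ℝ) (γ : ℝ → X),
      0 ≤ L ∧ LipschitzOnWith 1 γ (Set.Icc 0 L) ∧ γ 0 = x ∧ γ L = y) :
    ∀ x y : X,
      Real.log (1 + dist x y * max (p x) (p y)) ≤ dp x y ∧
      |Real.log (1 / p x) - Real.log (1 / p y)| ≤ dp x y := by
  intro x y
  have hlog : Real.log (1 + dist x y * max (p x) (p y)) ≤ dp x y := by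
    obtain ⟨L, γ, hL, hγ, hγ0, hγL⟩ := hconn x y
    rw [hdp]
    refine le_csInf ⟨_, L, γ, hL, hγ, hγ0, hγL, rfl⟩ ?_
    rintro _ ⟨L, γ, hL, hγ, rfl, rfl, rfl⟩
    exact log_one_add_dist_mul_max_le_integral hp hlip hL hγ
  refine ⟨hlog, le_trans ?_ hlog⟩
  simpa using abs_log_sub_log_le_log_one_add_mul_max (one_div_pos.2 (hp x))
    (one_div_pos.2 (hp y)) (by simpa using hlip.dist_le_mul x y)

/-- Lower-bound half of Lemma 3.7 for the σ-metric `dp`, defined as the infimum of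
`∫ p ds` over rectifiable (arclength-parameterized 1-Lipschitz) curves. -/
theorem sigma_metric_log_lower_bound {X : Type*} [MetricSpace X]
    (p : X → ℝ) (hp : ∀ u, 0 < p u) (hpc : Continuous p)
    (hlip : LipschitzWith 1 fun u => 1 / p u)
    (dp : X → X → ℝ)
    (hdp : ∀ x y : X, dp x y = sInf {r : ℝ | ∃ (L : ℝ) (γ : ℝ → X),
      0 ≤ L ∧ LipschitzOnWith 1 γ (Set.Icc 0 L) ∧ γ 0 = x ∧ γ L = y ∧
        r = ∫ s in (0:ℝ)..L, p (γ s)})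
    (hconn : ∀ x y : X, ∃ (L : ℝ) (γ : ℝ → X),
      0 ≤ L ∧ LipschitzOnWith 1 γ (Set.Icc 0 L) ∧ γ 0 = x ∧ γ L = y) :
    ∀ x y : X,
      Real.log (1 + dist x y * max (p x) (p y)) ≤ dp x y ∧
      |Real.log (1 / p x) - Real.log (1 / p y)| ≤ dp x y :=
  sigma_metric_log_lower_bound_general p hp hlip dp hdp hconn
end
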